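/- Let K = (K^{μν}) be an N×N matrix of differential operators with ε-graded coefficients as above, and write K = Σ_{i≥0} K_i ∂_x^i where the K_i are matrices of differential polynomials. Suppose the constant term vanishes, K_0 = 0. Let u^α ↦ ũ^α(u) = u^α + ∂_x r^α be a Miura transformation with r^α ∈ Â_N^{[−1]}. Then the transformed operator K_ũ, defined by (K_ũ)^{αβ} = Σ_{p,q≥0} (∂ũ^α(u)/∂u^μ_p) ∂_x^p ∘ K^{μν} ∘ (−∂_x)^q ∘ (∂ũ^β(u)/∂u^ν_q), also has vanishing constant term: (K_ũ)_0 = 0. -/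

import Mathlib

/-!
Common formal framework for the theory of differential polynomials, local
functionals and tau-structures, following Buryak–Dubrovin–Guéré–Rossi.

Variables of the algebra of differential polynomials: `Sum.inl (α, i)` stands
for `u^α_i` (with `u^α = u^α_0`) and `Sum.inr ()` stands for `ε`.  The paper's
index `1` (the unit direction) corresponds to `(0 : Fin N)` here.
-/

/-- The variables of the algebra of differential polynomials. -/
abbrev DVar (N : ℕ) : Type := (Fin N × ℕ) ⊕ Unit

/-- The ring `Â_N` of (extended) differential polynomials, realized inside the
ring of formal power series in the variables `u^α_i` and `ε`. -/
abbrev DP (N : ℕ) : Type := MvPowerSeries (DVar N) ℂ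

namespace DP

variable {N : ℕ}

/-- Coefficient of a monomial. -/
noncomputable def co (f : DP N) (m : DVar N →₀ ℕ) : ℂ :=
  MvPowerSeries.coeff m f

/-- Build a power series from its coefficients. -/
def ofCo (F : (DVar N →₀ ℕ) → ℂ) : DP N := F

/-- The variable `u^α_i`. -/
noncomputable def uv (α : Fin N) (i : ℕ) : DP N :=
  MvPowerSeries.X (Sum.inl (α, i))

/-- The variable `ε`. -/
noncomputable def eps : DP N := MvPowerSeries.X (Sum.inr ())

/-- The partial derivative `∂/∂v` with respect to one of the variables. -/
noncomputable def pd (v : DVar N) (f : DP N) : DP N :=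
  ofCo fun m => ((m v : ℂ) + 1) * co f (m + Finsupp.single v 1)

/-- The spatial derivative `∂_x = Σ_{α,i} u^α_{i+1} ∂/∂u^α_i`. -/
noncomputable def dx (f : DP N) : DP N :=
  ofCo fun m =>
    ∑ v ∈ m.support,
      (match v with
        | Sum.inl (α, i + 1) =>
            co (pd (Sum.inl (α, i)) f) (m - Finsupp.single (Sum.inl (α, i + 1)) 1)
        | _ => (0 : ℂ))

/-- The variational derivative `δ/δu^μ = Σ_{i≥0} (−∂_x)^i ∘ ∂/∂u^μ_i`. -/
noncomputable def vd (μ : Fin N) (f : DP N) : DP N :=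
  ofCo fun m => ∑ᶠ i : ℕ, ((-1 : ℂ) ^ i) * co (dx^[i] (pd (Sum.inl (μ, i)) f)) m

/-- The weighted degree of a monomial: `deg u^α_i = i`, `deg ε = −1`. -/
noncomputable def wdeg (m : DVar N →₀ ℕ) : ℤ :=
  ∑ v ∈ m.support,
    (match v with
      | Sum.inl (_, i) => (i : ℤ)
      | Sum.inr _ => (-1 : ℤ)) * (m v : ℤ)

/-- Degree-`k` homogeneity (membership in `Â_N^{[k]}`). -/
def IsHomog (k : ℤ) (f : DP N) : Prop :=
  ∀ m, co f m ≠ 0 → wdeg m = k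

/-- Being a constant, i.e. an element of `ℂ[[ε]]`. -/
def IsConst (f : DP N) : Prop :=
  ∀ m, co f m ≠ 0 → ∀ v ∈ m.support, v = Sum.inr ()

/-- Vanishing of the evaluation at `u^*_* = 0`. -/
def VanishAtU0 (f : DP N) : Prop :=
  ∀ k : ℕ, co f (Finsupp.single (Sum.inr ()) k) = 0

/-- Being a genuine differential polynomial: in each ε-degree at most `e`,
polynomiality (bounded degree, boundedly many variables) in the jet
variables `u^α_i`, `i ≥ 1`. -/
def IsDiffPoly (f : DP N) : Prop :=
  ∀ e : ℕ, ∃ D : ℕ, ∀ m, co f m ≠ 0 → m (Sum.inr ()) ≤ e →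
    ((∑ v ∈ m.support,
        (match v with
          | Sum.inl (_, _ + 1) => m v
          | _ => 0)) ≤ D) ∧
      ∀ (α : Fin N) (i : ℕ), D < i → m (Sum.inl (α, i)) = 0

/-- The submodule of constants `ℂ[[ε]] ⊆ Â_N`. -/
noncomputable def constSub (N : ℕ) : Submodule ℂ (DP N) where
  carrier := {f | IsConst f}
  add_mem' := by
    intro f g hf hg m hm
    have hco : co (f + g) m = co f m + co g m := map_add _ _ _
    by_cases h1 : co f m = 0
    · have h2 : co g m ≠ 0 := by
        intro h2; exact hm (by rw [hco, h1, h2, add_zero])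
      exact hg m h2
    · exact hf m h1
  zero_mem' := by
    intro m hm
    exact (hm (map_zero (MvPowerSeries.coeff (R := ℂ) m))).elim
  smul_mem' := by
    intro c f hf m hm
    have hne : co f m ≠ 0 := by
      intro h
      apply hm
      have hsm : co (c • f) m = c * co f m := by
        simp [co]
      rw [hsm, h, mul_zero]
    exact hf m hne

/-- The submodule `ℂ[[ε]] + ∂_x(Â_N)` by which one quotients to get local
functionals. -/
noncomputable def lfSub (N : ℕ) : Submodule ℂ (DP N) :=
  constSub N ⊔ Submodule.span ℂ (Set.range (dx : DP N → DP N))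

/-- The space `Λ̂_N` of local functionals. -/
abbrev LF (N : ℕ) := DP N ⧸ lfSub N

/-- The projection `f ↦ ∫ f dx`. -/
noncomputable def intg : DP N →ₗ[ℂ] LF N := (lfSub N).mkQ

/-- A choice of density for a local functional. -/
noncomputable def rep (h : LF N) : DP N :=
  (Submodule.Quotient.mk_surjective (lfSub N) h).choose

/-- The variational derivative `δ/δu^μ` of a local functional. -/
noncomputable def vdQ (μ : Fin N) (h : LF N) : DP N := vd μ (rep h)

/-- The partial derivative `∂/∂v` of a local functional. -/
noncomputable def pdQ (v : DVar N) (h : LF N) : LF N := intg (pd v (rep h))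

/-- The degree-`k` local functionals `Λ̂_N^{[k]}`. -/
noncomputable def LFHomog (N : ℕ) (k : ℤ) : Set (LF N) :=
  intg '' {f : DP N | IsHomog k f ∧ IsDiffPoly f}

/-- The operator `K = η ∂_x` applied to a tuple of differential polynomials. -/
noncomputable def etaAp (η : Matrix (Fin N) (Fin N) ℂ) (α : Fin N)
    (g : Fin N → DP N) : DP N :=
  ∑ ν : Fin N, η α ν • dx (g ν)

/-- The bracket `{f̄, ḡ}_{η∂_x}` of local functionals. -/
noncomputable def lfbEta (η : Matrix (Fin N) (Fin N) ℂ) (f g : LF N) : LF N :=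
  intg (∑ μ : Fin N, vdQ μ f * etaAp η μ fun ν => vdQ ν g)

/-- The bracket `{f, h̄}_{η∂_x}` of a differential polynomial with a local
functional. -/
noncomputable def pbEta (η : Matrix (Fin N) (Fin N) ℂ) (f : DP N) (h : LF N) : DP N :=
  ofCo fun m => ∑ γ : Fin N, ∑ᶠ n : ℕ,
    co (pd (Sum.inl (γ, n)) f * dx^[n] (etaAp η γ fun μ => vdQ μ h)) m

/-- A general operator `K^{γν} = Σ_j K^{γν}_j ∂_x^j` applied to a tuple of
differential polynomials. -/
noncomputable def Kap (K : Fin N → Fin N → ℕ → DP N) (γ : Fin N)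
    (g : Fin N → DP N) : DP N :=
  ∑ ν : Fin N, ofCo fun m => ∑ᶠ j : ℕ, co (K γ ν j * dx^[j] (g ν)) m

/-- The bracket `{f̄, ḡ}_K` of local functionals. -/
noncomputable def lfbK (K : Fin N → Fin N → ℕ → DP N) (f g : LF N) : LF N :=
  intg (∑ μ : Fin N, vdQ μ f * Kap K μ fun ν => vdQ ν g)

/-- The bracket `{f, h̄}_K` of a differential polynomial with a local
functional. -/
noncomputable def pbK (K : Fin N → Fin N → ℕ → DP N) (f : DP N) (h : LF N) : DP N :=
  ofCo fun m => ∑ γ : Fin N, ∑ᶠ n : ℕ,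
    co (pd (Sum.inl (γ, n)) f * dx^[n] (Kap K γ fun μ => vdQ μ h)) m

/-- Being a hamiltonian operator. -/
structure IsHamOp (K : Fin N → Fin N → ℕ → DP N) : Prop where
  finite : ∀ γ ν, ∃ J : ℕ, ∀ j, J ≤ j → K γ ν j = 0
  deg : ∀ (γ ν : Fin N) (j : ℕ), IsHomog (1 - (j : ℤ)) (K γ ν j)
  poly : ∀ γ ν j, IsDiffPoly (K γ ν j)
  antisym : ∀ f g : LF N, lfbK K f g = -lfbK K g f
  jacobi : ∀ f g h : LF N,
    lfbK K (lfbK K f g) h + lfbK K (lfbK K g h) f + lfbK K (lfbK K h f) g = 0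

/-- A hamiltonian hierarchy: a hamiltonian operator together with pairwise
commuting Hamiltonians `h̄_{β,q} ∈ Λ̂^{[0]}_N` such that `h̄_{1,0}` generates the
spatial translations. -/
structure IsHierarchy [NeZero N] (K : Fin N → Fin N → ℕ → DP N)
    (H : Fin N → ℕ → LF N) : Prop where
  ham : IsHamOp K
  mem : ∀ β q, H β q ∈ LFHomog N 0
  comm : ∀ β q γ p, lfbK K (H β q) (H γ p) = 0
  transl : ∀ α, Kap K α (fun μ => vdQ μ (H 0 0)) = uv α 1

/-- A tau-structure for a hamiltonian hierarchy.  Here `h β q` denotes the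
tau-symmetric density `h_{β,q-1}` (an index shift by one). -/
structure IsTauStructure [NeZero N] (K : Fin N → Fin N → ℕ → DP N)
    (H : Fin N → ℕ → LF N) (h : Fin N → ℕ → DP N) : Prop where
  mem : ∀ β q, IsHomog 0 (h β q) ∧ IsDiffPoly (h β q)
  casimir : ∀ β α, Kap K α (fun μ => vdQ μ (intg (h β 0))) = 0
  indep : LinearIndependent ℂ fun β : Fin N => intg (h β 0)
  nondeg : Matrix.det (Matrix.of fun α β : Fin N => co (K α β 1) 0) ≠ 0
  dens : ∀ β q, intg (h β (q + 1)) = H β q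
  tausym : ∀ α β p q, pbK K (h α p) (H β q) = pbK K (h β q) (H α p)

end DP



namespace DP

variable {N : ℕ}

/-- The operator `K^{μν} = Σ_j K^{μν}_j ∂_x^j` applied to a differential
polynomial. -/
noncomputable def KopAp (K : Fin N → Fin N → ℕ → DP N) (μ ν : Fin N)
    (g : DP N) : DP N :=
  ofCo fun m => ∑ᶠ j : ℕ, co (K μ ν j * dx^[j] g) m

/-- The transformed operator
`(K_ũ)^{αβ} = Σ_{p,q} (∂ũ^α/∂u^μ_p) ∂_x^p ∘ K^{μν} ∘ (−∂_x)^q ∘ (∂ũ^β/∂u^ν_q)`,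
as an operator acting on differential polynomials. -/
noncomputable def miuraK (K : Fin N → Fin N → ℕ → DP N) (ut : Fin N → DP N)
    (α β : Fin N) (g : DP N) : DP N :=
  ofCo fun m => ∑ᶠ p : ℕ, ∑ᶠ q : ℕ,
    co (∑ μ : Fin N, ∑ ν : Fin N,
      pd (Sum.inl (μ, p)) (ut α) *
        dx^[p] (KopAp K μ ν
          (((-1 : ℂ) ^ q) • dx^[q] (pd (Sum.inl (ν, q)) (ut β) * g)))) m

end DP


/-!
Applied to `1`, the `p`-th summand of `(K_ũ)^{αβ}` is
`Σ_{μ,ν} (∂ũ^α/∂u^μ_p) ∂_x^p K^{μν} (Σ_q (-∂_x)^q ∂ũ^β/∂u^ν_q)`, and the inner sum is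
`δũ^β/δu^ν = δ^β_ν`, because `δ/δu^ν ∘ ∂_x = 0` (the summands telescope by
`[∂/∂u^ν_{q+1}, ∂_x] = ∂/∂u^ν_q`). What remains is `K^{μβ}` applied to the constant `1`, i.e.
`K_0 = 0`. Pulling the sum over `q` through `K` and `∂_x` is legitimate since, by homogeneity,
the `q`-th inner term is divisible by `ε^q` and all operators involved preserve the ideals `(ε^n)`.
-/

namespace DP

open MvPowerSeries

variable {N : ℕ}

lemma co_eq (f : DP N) (m : DVar N →₀ ℕ) : co f m = coeff m f := rfl

lemma coeff_ofCo (F : (DVar N →₀ ℕ) → ℂ) (m : DVar N →₀ ℕ) :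
    coeff m (ofCo F) = F m := rfl

lemma pd_eq_pderiv (v : DVar N) (f : DP N) : pd v f = pderiv ℂ v f := by
  ext m
  rw [coeff_pderiv, mul_comm]
  rfl

lemma pd_add (v : DVar N) (f g : DP N) : pd v (f + g) = pd v f + pd v g := by
  simp only [pd_eq_pderiv, map_add]

lemma coeff_pd (v : DVar N) (f : DP N) (m : DVar N →₀ ℕ) :
    coeff m (pd v f) = (m v + 1) * coeff (m + Finsupp.single v 1) f := rfl

lemma pd_comm (v w : DVar N) (f : DP N) : pd v (pd w f) = pd w (pd v f) := by
  classical
  by_cases h : v = w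
  · rw [h]
  · ext m
    simp only [coeff_pd, Finsupp.add_apply, Finsupp.single_apply, h, Ne.symm h, if_false,
      add_zero, add_right_comm m]
    ring

lemma pd_X_mul (v a : DVar N) (g : DP N) :
    pd v (X a * g) = X a * pd v g + if a = v then g else 0 := by
  classical
  simp only [pd_eq_pderiv, Derivation.leibniz, pderiv_X, Pi.single_apply, smul_eq_mul]
  split_ifs <;> simp

lemma pd_uv (α : Fin N) (i : ℕ) (v : DVar N) :
    pd v (uv α i) = if Sum.inl (α, i) = v then 1 else 0 := by
  classical
  rw [pd_eq_pderiv, uv, pderiv_X, Pi.single_apply]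

lemma exists_add_eq_of_coeff_mul_ne_zero {f g : DP N} {m : DVar N →₀ ℕ}
    (h : coeff m (f * g) ≠ 0) :
    ∃ m₁ m₂, m₁ + m₂ = m ∧ coeff m₁ f ≠ 0 ∧ coeff m₂ g ≠ 0 := by
  classical
  rw [coeff_mul] at h
  obtain ⟨p, hp, hne⟩ := Finset.exists_ne_zero_of_sum_ne_zero h
  exact ⟨p.1, p.2, Finset.HasAntidiagonal.mem_antidiagonal.mp hp, left_ne_zero_of_mul hne,
    right_ne_zero_of_mul hne⟩

lemma coeff_X_mul (v : DVar N) (g : DP N) (m : DVar N →₀ ℕ) :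
    coeff m (X v * g) = if m v = 0 then 0 else coeff (m - Finsupp.single v 1) g := by
  rw [X_def, coeff_monomial_mul, one_mul]
  split_ifs with h₁ h₂ h₂ <;> rw [Finsupp.single_le_iff] at h₁ <;> first | rfl | omega

def epsDeg (m : DVar N →₀ ℕ) : ℕ := m (Sum.inr ())

def jetWeight : DVar N → ℕ
  | Sum.inl (_, i) => i
  | Sum.inr _ => 0

noncomputable def jetDeg : (DVar N →₀ ℕ) →+ ℕ := Finsupp.weight jetWeight

lemma epsDeg_add (m m' : DVar N →₀ ℕ) : epsDeg (m + m') = epsDeg m + epsDeg m' := rfl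

@[simp] lemma epsDeg_single_inl (w : Fin N × ℕ) (k : ℕ) :
    epsDeg (Finsupp.single (Sum.inl w : DVar N) k) = 0 := by
  simp [epsDeg]

@[simp] lemma jetDeg_single_inl (α : Fin N) (i k : ℕ) :
    jetDeg (Finsupp.single (Sum.inl (α, i) : DVar N) k) = k * i := by
  simp [jetDeg, Finsupp.weight_single, jetWeight]

lemma wdeg_eq (m : DVar N →₀ ℕ) : wdeg m = jetDeg m - epsDeg m := by
  classical
  have hjet : (jetDeg m : ℤ) = ∑ v ∈ m.support, (jetWeight v * m v : ℤ) := by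
    simp [jetDeg, Finsupp.weight_apply, Finsupp.sum, mul_comm]
  have heps : (epsDeg m : ℤ) = ∑ v ∈ m.support, if v = Sum.inr () then (m v : ℤ) else 0 := by
    rw [Finset.sum_ite_eq']
    split_ifs with h
    · rfl
    · simp [epsDeg, Finsupp.notMem_support_iff.mp h]
  rw [hjet, heps, ← Finset.sum_sub_distrib]
  refine Finset.sum_congr rfl fun v _ => ?_
  rcases v with ⟨α, i⟩ | ⟨⟩ <;> simp [jetWeight]

lemma isHomog_iff {k : ℤ} {f : DP N} :
    IsHomog k f ↔ ∀ m, coeff m f ≠ 0 → (jetDeg m : ℤ) - epsDeg m = k := by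
  simp only [IsHomog, wdeg_eq, co_eq]

def jetSucc (w : Fin N × ℕ) : DVar N := Sum.inl (w.1, w.2 + 1)

lemma jetSucc_injective : Function.Injective (jetSucc : Fin N × ℕ → DVar N) := by
  rintro ⟨α, i⟩ ⟨β, j⟩ h
  simp only [jetSucc, Sum.inl.injEq, Prod.mk.injEq, add_left_inj] at h
  rw [h.1, h.2]

lemma coeff_dx (f : DP N) (m : DVar N →₀ ℕ) {s : Finset (Fin N × ℕ)}
    (hs : ∀ w, m (jetSucc w) ≠ 0 → w ∈ s) :
    coeff m (dx f) = ∑ w ∈ s, coeff m (X (jetSucc w) * pd (Sum.inl w) f) := by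
  symm
  refine Finset.sum_bij_ne_zero (fun w _ _ => jetSucc w) ?_ ?_ ?_ ?_
  · intro w _ hw
    rw [coeff_X_mul] at hw
    split_ifs at hw with h
    · exact absurd rfl hw
    · exact Finsupp.mem_support_iff.mpr h
  · intro w₁ _ _ w₂ _ _ h
    exact jetSucc_injective h
  · intro v hv hne
    rcases v with ⟨α, _ | i⟩ | ⟨⟩
    · exact absurd rfl hne
    · have hm : m (jetSucc (α, i)) ≠ 0 := Finsupp.mem_support_iff.mp hv
      refine ⟨(α, i), hs _ hm, ?_, rfl⟩
      rwa [coeff_X_mul, if_neg hm]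
    · exact absurd rfl hne
  · intro w _ hw
    rw [coeff_X_mul, if_neg]
    · rfl
    · rintro h
      rw [coeff_X_mul, if_pos h] at hw
      exact hw rfl

lemma coeff_dx_eq_sum_support (f : DP N) (m : DVar N →₀ ℕ) :
    coeff m (dx f) = ∑ w ∈ m.support.preimage jetSucc jetSucc_injective.injOn,
      coeff m (X (jetSucc w) * pd (Sum.inl w) f) :=
  coeff_dx f m fun _ h => Finset.mem_preimage.mpr (Finsupp.mem_support_iff.mpr h)

lemma dx_add (f g : DP N) : dx (f + g) = dx f + dx g := by
  ext m
  simp only [map_add, coeff_dx_eq_sum_support, pd_add, mul_add, Finset.sum_add_distrib]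

noncomputable def dxHom : DP N →+ DP N := AddMonoidHom.mk' dx dx_add

lemma dx_iter_add (j : ℕ) (f g : DP N) : dx^[j] (f + g) = dx^[j] f + dx^[j] g :=
  iterate_map_add dxHom j f g

lemma dx_iter_zero (j : ℕ) : dx^[j] (0 : DP N) = 0 :=
  iterate_map_zero dxHom j

lemma dx_one : dx (1 : DP N) = 0 := by
  ext m
  simp [coeff_dx_eq_sum_support, pd_eq_pderiv]

lemma exists_of_coeff_dx_ne_zero {f : DP N} {m : DVar N →₀ ℕ} (h : coeff m (dx f) ≠ 0) :
    ∃ m', coeff m' f ≠ 0 ∧ epsDeg m' = epsDeg m ∧ jetDeg m' + 1 = jetDeg m := by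
  classical
  rw [coeff_dx_eq_sum_support] at h
  obtain ⟨⟨α, i⟩, -, hw⟩ := Finset.exists_ne_zero_of_sum_ne_zero h
  obtain ⟨m₁, m₂, rfl, h₁, h₂⟩ := exists_add_eq_of_coeff_mul_ne_zero hw
  have hm₁ : m₁ = Finsupp.single (jetSucc (α, i)) 1 := by
    by_contra hne
    rw [coeff_X, if_neg hne] at h₁
    exact h₁ rfl
  subst hm₁
  refine ⟨m₂ + Finsupp.single (Sum.inl (α, i)) 1, ?_, ?_, ?_⟩
  · rw [coeff_pd] at h₂
    exact right_ne_zero_of_mul h₂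
  · simp [jetSucc, epsDeg_add, add_comm]
  · simp [jetSucc, map_add]
    ring

lemma exists_of_coeff_dx_iter_ne_zero {f : DP N} {m : DVar N →₀ ℕ} {j : ℕ}
    (h : coeff m (dx^[j] f) ≠ 0) :
    ∃ m', coeff m' f ≠ 0 ∧ epsDeg m' = epsDeg m ∧ jetDeg m' + j = jetDeg m := by
  induction j generalizing m with
  | zero => exact ⟨m, h, rfl, rfl⟩
  | succ j ih =>
    rw [Function.iterate_succ_apply'] at h
    obtain ⟨m', h', heps, hjet⟩ := exists_of_coeff_dx_ne_zero h
    obtain ⟨m'', h'', heps', hjet'⟩ := ih h'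
    exact ⟨m'', h'', heps'.trans heps, by omega⟩

lemma coeff_pd_dx (v : DVar N) (f : DP N) (m : DVar N →₀ ℕ) :
    coeff m (pd v (dx f)) = coeff m (dx (pd v f)) +
      ∑ w ∈ (m + Finsupp.single v 1).support.preimage jetSucc jetSucc_injective.injOn,
        if jetSucc w = v then coeff m (pd (Sum.inl w) f) else 0 := by
  classical
  set S := (m + Finsupp.single v 1).support.preimage jetSucc jetSucc_injective.injOn
  have hS : ∀ w, m (jetSucc w) ≠ 0 → w ∈ S := fun w h => by
    simp only [S, Finset.mem_preimage, Finsupp.mem_support_iff, Finsupp.add_apply]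
    omega
  calc coeff m (pd v (dx f))
      = ∑ w ∈ S, coeff m (pd v (X (jetSucc w) * pd (Sum.inl w) f)) := by
        simp only [coeff_pd, coeff_dx_eq_sum_support, Finset.mul_sum]
        rfl
    _ = _ := by
        simp only [pd_X_mul, pd_comm v, map_add, apply_ite (coeff m), map_zero,
          Finset.sum_add_distrib, ← coeff_dx _ _ hS]

lemma pd_dx_of_notMem_range {v : DVar N} (hv : v ∉ Set.range jetSucc) (f : DP N) :
    pd v (dx f) = dx (pd v f) := by
  ext m
  rw [coeff_pd_dx, Finset.sum_eq_zero fun w _ => if_neg fun h => hv ⟨w, h⟩, add_zero]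

lemma pd_jetSucc_dx (w : Fin N × ℕ) (f : DP N) :
    pd (jetSucc w) (dx f) = dx (pd (jetSucc w) f) + pd (Sum.inl w) f := by
  classical
  ext m
  simp only [coeff_pd_dx, jetSucc_injective.eq_iff, Finset.sum_ite_eq', map_add]
  rw [if_pos]
  simp

lemma IsHomog.add {k : ℤ} {f g : DP N} (hf : IsHomog k f) (hg : IsHomog k g) :
    IsHomog k (f + g) := by
  intro m hm
  rw [co_eq, map_add] at hm
  by_cases h : coeff m f = 0
  · exact hg m (by rw [co_eq]; simpa [h] using hm)
  · exact hf m h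

lemma isHomog_uv (α : Fin N) (i : ℕ) : IsHomog i (uv α i) := by
  classical
  rw [isHomog_iff]
  intro m hm
  rw [uv, coeff_X] at hm
  split_ifs at hm with h
  · simp [h]
  · exact absurd rfl hm

lemma isHomog_dx {k : ℤ} {f : DP N} (hf : IsHomog k f) : IsHomog (k + 1) (dx f) := by
  rw [isHomog_iff] at hf ⊢
  intro m hm
  obtain ⟨m', hm', heps, hjet⟩ := exists_of_coeff_dx_ne_zero hm
  have := hf m' hm'
  omega

lemma IsHomog.le_of_coeff_dx_iter_pd_ne_zero {k : ℤ} {f : DP N} (hf : IsHomog k f)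
    {μ : Fin N} {i j : ℕ} {m : DVar N →₀ ℕ}
    (h : coeff m (dx^[j] (pd (Sum.inl (μ, i)) f)) ≠ 0) : (i : ℤ) ≤ epsDeg m + k := by
  obtain ⟨m', hm', heps, -⟩ := exists_of_coeff_dx_iter_ne_zero h
  rw [coeff_pd] at hm'
  have := (isHomog_iff.mp hf) _ (right_ne_zero_of_mul hm')
  simp only [map_add, epsDeg_add, jetDeg_single_inl, epsDeg_single_inl] at this
  omega

lemma coeff_vd (μ : Fin N) (f : DP N) (m : DVar N →₀ ℕ) :
    coeff m (vd μ f) = ∑ᶠ i : ℕ, (-1 : ℂ) ^ i * coeff m (dx^[i] (pd (Sum.inl (μ, i)) f)) :=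
  rfl

lemma IsHomog.hasFiniteSupport_vd {k : ℤ} {f : DP N} (hf : IsHomog k f) (μ : Fin N)
    (m : DVar N →₀ ℕ) :
    Function.HasFiniteSupport
      fun i : ℕ => (-1 : ℂ) ^ i * coeff m (dx^[i] (pd (Sum.inl (μ, i)) f)) := by
  refine (Set.finite_Iic (epsDeg m + k).toNat).subset fun i hi => ?_
  have := hf.le_of_coeff_dx_iter_pd_ne_zero (right_ne_zero_of_mul hi)
  simp only [Set.mem_Iic]
  omega

lemma vd_add {k l : ℤ} {f g : DP N} (hf : IsHomog k f) (hg : IsHomog l g) (μ : Fin N) :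
    vd μ (f + g) = vd μ f + vd μ g := by
  ext m
  simp only [map_add, coeff_vd, pd_add, dx_iter_add, mul_add]
  exact finsum_add_distrib (hf.hasFiniteSupport_vd μ m) (hg.hasFiniteSupport_vd μ m)

lemma vd_uv (μ β : Fin N) : vd μ (uv β 0) = if μ = β then 1 else 0 := by
  ext m
  rw [coeff_vd, finsum_eq_single _ 0]
  · rcases eq_or_ne μ β with rfl | h
    · simp [pd_uv]
    · simp [pd_uv, h, Ne.symm h]
  · intro i hi
    rw [pd_uv, if_neg (by simp [Ne.symm hi]), dx_iter_zero, map_zero, mul_zero]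

/-- The summands telescope, by `pd_jetSucc_dx`. -/
lemma vd_dx {k : ℤ} {r : DP N} (hr : IsHomog k r) (μ : Fin N) : vd μ (dx r) = 0 := by
  ext m
  set B : ℕ → ℂ := fun j => (-1) ^ j * coeff m (dx^[j + 1] (pd (Sum.inl (μ, j)) r))
  have hzero : (-1 : ℂ) ^ 0 * coeff m (dx^[0] (pd (Sum.inl (μ, 0)) (dx r))) = B 0 := by
    rw [pd_dx_of_notMem_range (by rintro ⟨w, h⟩; simp [jetSucc] at h)]
    simp [B]
  have hsucc : ∀ j, (-1 : ℂ) ^ (j + 1) * coeff m (dx^[j + 1] (pd (Sum.inl (μ, j + 1)) (dx r)))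
      = B (j + 1) - B j := fun j => by
    rw [show (Sum.inl (μ, j + 1) : DVar N) = jetSucc (μ, j) from rfl, pd_jetSucc_dx,
      dx_iter_add, ← Function.iterate_succ_apply, map_add, pow_succ]
    simp only [B, jetSucc]
    ring
  obtain ⟨n, hn⟩ := exists_nat_gt ((epsDeg m : ℤ) + k)
  have hsupp : Function.support (fun i : ℕ =>
      (-1 : ℂ) ^ i * coeff m (dx^[i] (pd (Sum.inl (μ, i)) (dx r)))) ⊆ Finset.range (n + 1) :=
    fun i hi => by
      have := (isHomog_dx hr).le_of_coeff_dx_iter_pd_ne_zero (right_ne_zero_of_mul hi)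
      simp only [Finset.coe_range, Set.mem_Iio]
      omega
  have hBn : B n = 0 := by
    by_contra h
    have := hr.le_of_coeff_dx_iter_pd_ne_zero (right_ne_zero_of_mul h)
    omega
  rw [coeff_vd, finsum_eq_sum_of_support_subset _ hsupp, Finset.sum_range_succ', hzero,
    Finset.sum_congr rfl fun j _ => hsucc j, Finset.sum_range_sub, hBn, map_zero]
  ring

lemma vd_uv_add_dx {k : ℤ} {r : DP N} (hr : IsHomog k r) (μ β : Fin N) :
    vd μ (uv β 0 + dx r) = if μ = β then 1 else 0 := by
  rw [vd_add (isHomog_uv β 0) (isHomog_dx hr), vd_uv, vd_dx hr, add_zero]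

/-- The ideal `(ε^n)`. -/
def epsPowIdeal (n : ℕ) : Ideal (DP N) where
  carrier := {g | ∀ m, epsDeg m < n → coeff m g = 0}
  add_mem' {f g} hf hg m hm := by rw [map_add, hf m hm, hg m hm, add_zero]
  zero_mem' m _ := map_zero _
  smul_mem' c g hg m hm := by
    by_contra h
    obtain ⟨m₁, m₂, rfl, -, h₂⟩ := exists_add_eq_of_coeff_mul_ne_zero h
    exact h₂ (hg m₂ (by rw [epsDeg_add] at hm; omega))

lemma dx_iter_mem_epsPowIdeal {n : ℕ} {g : DP N} (hg : g ∈ epsPowIdeal n) (j : ℕ) :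
    dx^[j] g ∈ epsPowIdeal n := fun m hm => by
  by_contra h
  obtain ⟨m', hm', heps, -⟩ := exists_of_coeff_dx_iter_ne_zero h
  exact hm' (hg m' (heps ▸ hm))

lemma coeff_KopAp (K : Fin N → Fin N → ℕ → DP N) (μ ν : Fin N) (g : DP N)
    (m : DVar N →₀ ℕ) :
    coeff m (KopAp K μ ν g) = ∑ᶠ j : ℕ, coeff m (K μ ν j * dx^[j] g) :=
  rfl

lemma KopAp_mem_epsPowIdeal (K : Fin N → Fin N → ℕ → DP N) (μ ν : Fin N) {n : ℕ}
    {g : DP N} (hg : g ∈ epsPowIdeal n) : KopAp K μ ν g ∈ epsPowIdeal n := fun m hm => by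
  rw [coeff_KopAp]
  exact finsum_eq_zero_of_forall_eq_zero fun j =>
    Ideal.mul_mem_left _ _ (dx_iter_mem_epsPowIdeal hg j) m hm

/-- `∂_x` raises the jet degree by one, so only `j ≤ jetDeg m` contribute. -/
lemma hasFiniteSupport_coeff_mul_dx_iter (F : ℕ → DP N) (g : DP N) (m : DVar N →₀ ℕ) :
    Function.HasFiniteSupport fun j => coeff m (F j * dx^[j] g) := by
  refine (Set.finite_Iic (jetDeg m)).subset fun j hj => ?_
  obtain ⟨m₁, m₂, rfl, -, h₂⟩ := exists_add_eq_of_coeff_mul_ne_zero hj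
  obtain ⟨m', -, -, hjet⟩ := exists_of_coeff_dx_iter_ne_zero h₂
  simp only [Set.mem_Iic, map_add]
  omega

lemma KopAp_add (K : Fin N → Fin N → ℕ → DP N) (μ ν : Fin N) (f g : DP N) :
    KopAp K μ ν (f + g) = KopAp K μ ν f + KopAp K μ ν g := by
  ext m
  simp only [map_add, coeff_KopAp, dx_iter_add, mul_add]
  exact finsum_add_distrib (hasFiniteSupport_coeff_mul_dx_iter _ f m)
    (hasFiniteSupport_coeff_mul_dx_iter _ g m)

lemma KopAp_zero (K : Fin N → Fin N → ℕ → DP N) (μ ν : Fin N) : KopAp K μ ν 0 = 0 := by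
  simpa using KopAp_add K μ ν 0 0

lemma KopAp_one {K : Fin N → Fin N → ℕ → DP N} {μ ν : Fin N} (hK0 : K μ ν 0 = 0) :
    KopAp K μ ν 1 = 0 := by
  ext m
  rw [coeff_KopAp, map_zero]
  refine finsum_eq_zero_of_forall_eq_zero fun j => ?_
  cases j with
  | zero => rw [hK0, zero_mul, map_zero]
  | succ j => rw [Function.iterate_succ_apply, dx_one, dx_iter_zero, mul_zero, map_zero]

noncomputable def miuraSummand (K : Fin N → Fin N → ℕ → DP N) (A : Fin N → DP N) (p : ℕ) :
    (Fin N → DP N) →+ DP N :=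
  AddMonoidHom.mk' (fun g => ∑ μ, ∑ ν, A μ * dx^[p] (KopAp K μ ν (g ν))) fun g g' => by
    simp only [Pi.add_apply, KopAp_add, dx_iter_add, mul_add, Finset.sum_add_distrib]

lemma miuraSummand_apply (K : Fin N → Fin N → ℕ → DP N) (A : Fin N → DP N) (p : ℕ)
    (g : Fin N → DP N) :
    miuraSummand K A p g = ∑ μ, ∑ ν, A μ * dx^[p] (KopAp K μ ν (g ν)) :=
  rfl

lemma coeff_miuraK (K : Fin N → Fin N → ℕ → DP N) (ut : Fin N → DP N) (α β : Fin N)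
    (g : DP N) (m : DVar N →₀ ℕ) :
    coeff m (miuraK K ut α β g) = ∑ᶠ p : ℕ, ∑ᶠ q : ℕ,
      coeff m (miuraSummand K (fun μ => pd (Sum.inl (μ, p)) (ut α)) p
        fun ν => (-1 : ℂ) ^ q • dx^[q] (pd (Sum.inl (ν, q)) (ut β) * g)) :=
  rfl

lemma miuraSummand_mem_epsPowIdeal (K : Fin N → Fin N → ℕ → DP N) (A : Fin N → DP N)
    (p : ℕ) {n : ℕ} {g : Fin N → DP N} (hg : ∀ ν, g ν ∈ epsPowIdeal n) :
    miuraSummand K A p g ∈ epsPowIdeal n := by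
  rw [miuraSummand_apply]
  exact Ideal.sum_mem _ fun μ _ => Ideal.sum_mem _ fun ν _ =>
      Ideal.mul_mem_left _ _ (dx_iter_mem_epsPowIdeal (KopAp_mem_epsPowIdeal K μ ν (hg ν)) p)

lemma miuraSummand_ite_one {K : Fin N → Fin N → ℕ → DP N} (hK0 : ∀ μ ν, K μ ν 0 = 0)
    (A : Fin N → DP N) (p : ℕ) (β : Fin N) :
    miuraSummand K A p (fun ν => if ν = β then 1 else 0) = 0 := by
  rw [miuraSummand_apply]
  refine Finset.sum_eq_zero fun μ _ => Finset.sum_eq_zero fun ν _ => ?_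
  split_ifs
  · rw [KopAp_one (hK0 μ ν), dx_iter_zero, mul_zero]
  · rw [KopAp_zero, dx_iter_zero, mul_zero]

theorem finsum_coeff_map_eq {ι : Type*} (Φ : (ι → DP N) →+ DP N)
    (hΦ : ∀ n g, (∀ i, g i ∈ epsPowIdeal n) → Φ g ∈ epsPowIdeal n)
    (g : ℕ → ι → DP N) (hg : ∀ q i, g q i ∈ epsPowIdeal q)
    (m : DVar N →₀ ℕ) :
    ∑ᶠ q, coeff m (Φ (g q)) = coeff m (Φ fun i => ofCo fun m' => ∑ᶠ q, coeff m' (g q i)) := by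
  set n := epsDeg m + 1
  have hsupp_of : ∀ m', epsDeg m' < n → ∀ i,
      Function.support (fun q => coeff m' (g q i)) ⊆ Finset.range n := fun m' hm' i q hq => by
    simp only [Finset.coe_range, Set.mem_Iio]
    by_contra hqn
    exact hq (hg q i m' (by omega))
  have hsupp : Function.support (fun q => coeff m (Φ (g q))) ⊆ Finset.range n := by
    intro q hq
    by_contra hqn
    refine hq (hΦ n _ (fun i m' hm' => ?_) m (Nat.lt_succ_self _))
    by_contra h
    exact hqn (hsupp_of m' hm' i h)
  rw [finsum_eq_sum_of_support_subset _ hsupp, ← map_sum, ← map_sum, ← sub_eq_zero, ← map_sub,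
    ← map_sub]
  refine hΦ n _ (fun i m' hm' => ?_) m (Nat.lt_succ_self _)
  rw [Pi.sub_apply, Finset.sum_apply, map_sub, map_sum, coeff_ofCo,
    finsum_eq_sum_of_support_subset _ (hsupp_of m' hm' i), sub_self]

end DP

open DP in
/-- The constant term of an operator `Σ_j C_j ∂_x^j` is its value `C_0` on `1`. -/
theorem statement1_general (N : ℕ) (K : Fin N → Fin N → ℕ → DP N)
    (hK0 : ∀ μ ν, K μ ν 0 = 0)
    (r : Fin N → DP N)
    (hr : ∀ α, IsHomog (-1) (r α) ∧ IsDiffPoly (r α))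
    (ut : Fin N → DP N) (hut : ∀ α, ut α = uv α 0 + dx (r α)) :
    ∀ α β : Fin N, miuraK K ut α β (1 : DP N) = 0 := by
  intro α β
  have hvd : ∀ ν, vd ν (ut β) = if ν = β then 1 else 0 := fun ν => by
    rw [hut]
    exact vd_uv_add_dx (hr β).1 ν β
  have hut0 : IsHomog 0 (ut β) := by
    simpa [hut] using (isHomog_uv β 0).add (isHomog_dx (hr β).1)
  have hinner : ∀ q ν, (-1 : ℂ) ^ q • dx^[q] (pd (Sum.inl (ν, q)) (ut β)) ∈ epsPowIdeal q :=
    fun q ν m hm => by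
      by_contra h
      rw [MvPowerSeries.coeff_smul] at h
      have := hut0.le_of_coeff_dx_iter_pd_ne_zero (right_ne_zero_of_mul h)
      omega
  ext m
  rw [coeff_miuraK, map_zero]
  refine finsum_eq_zero_of_forall_eq_zero fun p => ?_
  simp only [mul_one]
  rw [finsum_coeff_map_eq _ (fun _ _ => miuraSummand_mem_epsPowIdeal K _ p) _ hinner]
  change MvPowerSeries.coeff m (miuraSummand K _ p fun ν => vd ν (ut β)) = 0
  rw [funext hvd, miuraSummand_ite_one hK0, map_zero]

open DP in
/-- Lemma on the constant term of a hamiltonian operator under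
a Miura transformation of the form `ũ^α = u^α + ∂_x r^α`.  The constant term
of an operator `Σ_j C_j ∂_x^j` is `C_0`, i.e. its value on the constant
differential polynomial `1`. -/
theorem statement1 (N : ℕ) (K : Fin N → Fin N → ℕ → DP N)
    (hfin : ∀ μ ν, ∃ J : ℕ, ∀ j, J ≤ j → K μ ν j = 0)
    (hdeg : ∀ (μ ν : Fin N) (j : ℕ), IsHomog (1 - (j : ℤ)) (K μ ν j))
    (hpoly : ∀ μ ν j, IsDiffPoly (K μ ν j))
    (hK0 : ∀ μ ν, K μ ν 0 = 0)
    (r : Fin N → DP N)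
    (hr : ∀ α, IsHomog (-1) (r α) ∧ IsDiffPoly (r α))
    (ut : Fin N → DP N) (hut : ∀ α, ut α = uv α 0 + dx (r α)) :
    ∀ α β : Fin N, miuraK K ut α β (1 : DP N) = 0 :=
  statement1_general N K hK0 r hr ut hut
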